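/- Let f : [0,T] → ℝ be continuous with f(0) < a. Suppose that f(r ∧ τ̄_a(f)) = f(r ∧ τ̲_a(f)) for every rational r ∈ [0,T], and that τ̲_a(f) < τ̄_a(f). Then f(t) = a for every t ∈ [τ̲_a(f), τ̄_a(f)]; in particular there exist rationals 0 ≤ s < r ≤ T such that f is identically equal to a on [s, r]. -/

import Mathlib

open Set

/-- Lower hitting time `τ̲_a(f) = inf{t ∈ [0,T] : f(t) ≥ a} ∧ T` (with `inf ∅ = +∞`). -/
noncomputable def tauLow (T : ℝ) (f : ℝ → ℝ) (a : ℝ) : ℝ :=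
  sInf ({s ∈ Set.Icc (0 : ℝ) T | a ≤ f s} ∪ {T})

/-- Upper hitting time `τ̄_a(f) = inf{t ∈ [0,T] : f(t) > a} ∧ T` (with `inf ∅ = +∞`). -/
noncomputable def tauUp (T : ℝ) (f : ℝ → ℝ) (a : ℝ) : ℝ :=
  sInf ({s ∈ Set.Icc (0 : ℝ) T | a < f s} ∪ {T})

/-!
Between `τ̲_a(f)` and `τ̄_a(f)` the two stopped paths agree at every rational time, so `f` is
constant on `[τ̲_a(f), τ̄_a(f)]` by continuity and density of `ℚ`. The constant is `f(τ̲_a(f))`,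
which is `≥ a` because the closed set `{f ≥ a}` contains its infimum once `τ̲_a(f) < T`, and
`≤ a` because `τ̲_a(f) < τ̄_a(f)`.
-/

/-- `tauLow T f a` and `tauUp T f a` unfold definitionally to this, with `p` equal to `(a ≤ f ·)`
and `(a < f ·)`. -/
noncomputable def hittingTime (T : ℝ) (p : ℝ → Prop) : ℝ :=
  sInf ({s ∈ Icc 0 T | p s} ∪ {T})

namespace hittingTime

variable {T t : ℝ} {p : ℝ → Prop}

lemma bddBelow : BddBelow ({s ∈ Icc 0 T | p s} ∪ {T}) :=
  (bddBelow_Icc.mono (sep_subset _ _)).union bddBelow_singleton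

lemma le_self : hittingTime T p ≤ T :=
  csInf_le bddBelow (Or.inr rfl)

lemma nonneg (hT : 0 ≤ T) : 0 ≤ hittingTime T p := by
  refine le_csInf ⟨T, Or.inr rfl⟩ ?_
  rintro x (⟨⟨hx, -⟩, -⟩ | rfl)
  exacts [hx, hT]

lemma not_of_lt (ht0 : 0 ≤ t) (ht : t < hittingTime T p) : ¬ p t := fun hpt =>
  (csInf_le bddBelow (Or.inl ⟨⟨ht0, (ht.trans_le le_self).le⟩, hpt⟩)).not_gt ht

lemma mem_of_isClosed (hp : IsClosed {s ∈ Icc 0 T | p s}) (hlt : hittingTime T p < T) :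
    p (hittingTime T p) := by
  rcases (hp.union isClosed_singleton).csInf_mem ⟨T, Or.inr rfl⟩ bddBelow with ⟨-, h⟩ | h
  · exact h
  · exact absurd h hlt.ne

end hittingTime

lemma ContinuousOn.le_apply_tauLow {T a : ℝ} {f : ℝ → ℝ} (hf : ContinuousOn f (Icc 0 T))
    (hlt : tauLow T f a < T) : a ≤ f (tauLow T f a) :=
  hittingTime.mem_of_isClosed (hf.preimage_isClosed_of_isClosed isClosed_Icc isClosed_Ici) hlt

lemma ContinuousOn.eq_of_eq_on_rat {x y c : ℝ} {f : ℝ → ℝ} (hf : ContinuousOn f (Icc x y))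
    (hxy : x < y) (hq : ∀ q : ℚ, (q : ℝ) ∈ Icc x y → f q = c) : ∀ t ∈ Icc x y, f t = c := by
  have hdense : Icc x y ⊆ closure (Ioo x y ∩ range ((↑) : ℚ → ℝ)) := by
    rw [← closure_Ioo hxy.ne]
    exact closure_minimal (Rat.denseRange_cast.open_subset_closure_inter isOpen_Ioo)
      isClosed_closure
  refine EqOn.of_subset_closure ?_ hf continuousOn_const
    (inter_subset_left.trans Ioo_subset_Icc_self) hdense
  rintro _ ⟨hx, q, rfl⟩
  exact hq q (Ioo_subset_Icc_self hx)

theorem stmt_12_general (T : ℝ) (hT : 0 < T) (f : ℝ → ℝ)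
    (hf : ContinuousOn f (Set.Icc 0 T))
    (a : ℝ)
    (hrat : ∀ r : ℚ, (r : ℝ) ∈ Set.Icc (0 : ℝ) T →
      f (min (r : ℝ) (tauUp T f a)) = f (min (r : ℝ) (tauLow T f a)))
    (hlt : tauLow T f a < tauUp T f a) :
    (∀ t ∈ Set.Icc (tauLow T f a) (tauUp T f a), f t = a) ∧
      ∃ s r : ℚ, 0 ≤ (s : ℝ) ∧ (s : ℝ) < (r : ℝ) ∧ (r : ℝ) ≤ T ∧
        ∀ t ∈ Set.Icc (s : ℝ) (r : ℝ), f t = a := by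
  set τl := tauLow T f a
  set τu := tauUp T f a
  have hτl : 0 ≤ τl := hittingTime.nonneg hT.le
  have hτu : τu ≤ T := hittingTime.le_self
  have hconst : ∀ t ∈ Icc τl τu, f t = f τl := by
    refine (hf.mono (Icc_subset_Icc hτl hτu)).eq_of_eq_on_rat hlt fun q hq => ?_
    simpa [min_eq_left hq.2, min_eq_right hq.1] using hrat q ⟨hτl.trans hq.1, hq.2.trans hτu⟩
  have hle : f τl ≤ a := not_lt.1 (hittingTime.not_of_lt (p := (a < f ·)) hτl hlt)
  have hge : a ≤ f τl := hf.le_apply_tauLow (hlt.trans_le hτu)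
  have hon : ∀ t ∈ Icc τl τu, f t = a := fun t ht => (hconst t ht).trans (hle.antisymm hge)
  obtain ⟨s, hτs, hsu⟩ := exists_rat_btwn hlt
  obtain ⟨r, hsr, hru⟩ := exists_rat_btwn hsu
  exact ⟨hon, s, r, hτl.trans hτs.le, hsr, hru.le.trans hτu,
    fun t ht => hon t ⟨hτs.le.trans ht.1, ht.2.trans hru.le⟩⟩

theorem stmt_12 (T : ℝ) (hT : 0 < T) (f : ℝ → ℝ)
    (hf : ContinuousOn f (Set.Icc 0 T))
    (a : ℝ) (h0 : f 0 < a)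
    (hrat : ∀ r : ℚ, (r : ℝ) ∈ Set.Icc (0 : ℝ) T →
      f (min (r : ℝ) (tauUp T f a)) = f (min (r : ℝ) (tauLow T f a)))
    (hlt : tauLow T f a < tauUp T f a) :
    (∀ t ∈ Set.Icc (tauLow T f a) (tauUp T f a), f t = a) ∧
      ∃ s r : ℚ, 0 ≤ (s : ℝ) ∧ (s : ℝ) < (r : ℝ) ∧ (r : ℝ) ≤ T ∧
        ∀ t ∈ Set.Icc (s : ℝ) (r : ℝ), f t = a :=
  stmt_12_general T hT f hf a hrat hlt
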